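/- Fix n > 1 and let B_k(t) be defined by B_0=B_1=1, B_k=B_{k-1}-t·B_{k-2}. Then the roots of B_n(t) are exactly t = 1/(4cos²(jπ/(n+1))) for j = 1,...,⌊n/2⌋ — equivalently, B_n(1/(4cos²θ)) = 0 iff θ = jπ/(n+1); formally: B_n(t) = ∏_{j=1}^{⌊n/2⌋} (1 - 4 cos²(jπ/(n+1))·t). -/

import Mathlib

/-!
If `α + β = 1` and `α * β = t`, then `B_k(t) (α - β) = α ^ (k + 1) - β ^ (k + 1)`. Factor
`α ^ (n + 1) - β ^ (n + 1)` over the `(n + 1)`-st roots of unity `ω ^ j` and pair the factors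
`j` and `n + 1 - j`: with `ω ^ j = e ^ (2 i θ)`, `θ = j π / (n + 1)`, their product is
`(α + β) ^ 2 - 4 cos² θ · α β = 1 - 4 cos² θ · t`, and for odd `n` the unpaired factor
`α + β` is `1`. Dividing by `α - β` proves the identity for `t ≠ 1/4`, and continuity in `t`
gives it at `t = 1/4`.
-/

open Real

/-- The polynomials `B_0 = B_1 = 1`, `B_k = B_{k-1} - t B_{k-2}`. -/
noncomputable def Bpoly : ℕ → ℝ → ℝ
  | 0, _ => 1
  | 1, _ => 1
  | (k + 2), t => Bpoly (k + 1) t - t * Bpoly k t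

open Finset

theorem continuous_Bpoly : ∀ k, Continuous (Bpoly k)
  | 0 => continuous_const
  | 1 => continuous_const
  | k + 2 => (continuous_Bpoly (k + 1)).sub (continuous_id.mul (continuous_Bpoly k))

theorem Bpoly_mul_sub_eq_pow_sub_pow {t : ℝ} {α β : ℂ} (hsum : α + β = 1) (hprod : α * β = t) :
    ∀ k, (Bpoly k t : ℂ) * (α - β) = α ^ (k + 1) - β ^ (k + 1)
  | 0 => by simp [Bpoly]
  | 1 => by simp only [Bpoly, Complex.ofReal_one, one_mul]; linear_combination (β - α) * hsum
  | k + 2 => by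
    have h₀ := Bpoly_mul_sub_eq_pow_sub_pow hsum hprod k
    have h₁ := Bpoly_mul_sub_eq_pow_sub_pow hsum hprod (k + 1)
    simp only [Bpoly, Complex.ofReal_sub, Complex.ofReal_mul, ← hprod]
    linear_combination h₁ - α * β * h₀ - (α ^ (k + 2) - β ^ (k + 2)) * hsum

theorem Finset.prod_Icc_eq_prod_mul_reflect {M : Type*} [CommMonoid M] (f : ℕ → M) (n : ℕ)
    (hmid : Odd n → f (n / 2 + 1) = 1) :
    ∏ j ∈ Icc 1 n, f j = ∏ j ∈ Icc 1 (n / 2), f j * f (n + 1 - j) := by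
  have hsplit : ∏ j ∈ Icc 1 n, f j = (∏ j ∈ Icc 1 (n / 2), f j) * ∏ j ∈ Ioc (n / 2) n, f j := by
    rw [← zero_add 1, Icc_add_one_left_eq_Ioc, Icc_add_one_left_eq_Ioc]
    exact (prod_Ioc_consecutive f (Nat.zero_le _) (Nat.div_le_self n 2)).symm
  have hreflect : ∏ j ∈ Ioc (n / 2) n, f j = ∏ j ∈ Icc 1 (n - n / 2), f (n + 1 - j) :=
    prod_nbij' (fun j ↦ n + 1 - j) (fun j ↦ n + 1 - j) (by intro j; simp; omega)
      (by intro j; simp; omega) (by intro j; simp; omega) (by intro j; simp; omega)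
      (by intro j hj; simp at hj; congr; omega)
  rw [hsplit, hreflect, prod_mul_distrib]
  rcases n.even_or_odd with hn | hn
  · rw [show n - n / 2 = n / 2 by grind]
  · rw [show n - n / 2 = n / 2 + 1 by grind, prod_Icc_succ_top (by omega),
      show n + 1 - (n / 2 + 1) = n / 2 + 1 by grind, hmid hn, mul_one]

theorem IsPrimitiveRoot.pow_sub_pow_eq_mul_prod_Icc {R : Type*} [CommRing R] [IsDomain R]
    {ζ : R} {n : ℕ} (hζ : IsPrimitiveRoot ζ (n + 1)) (x y : R) :
    x ^ (n + 1) - y ^ (n + 1) = (x - y) * ∏ j ∈ Icc 1 n, (x - ζ ^ j * y) := by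
  have := congrArg (Polynomial.eval x) (X_pow_sub_C_eq_prod hζ n.succ_pos (rfl : y ^ (n + 1) = _))
  simp only [Polynomial.eval_sub, Polynomial.eval_pow, Polynomial.eval_X, Polynomial.eval_C,
    Polynomial.eval_prod] at this
  rw [this, range_eq_Ico, prod_eq_prod_Ico_succ_bot n.succ_pos, pow_zero, one_mul]
  rfl

section

open Complex

theorem sub_exp_sq_mul_sub_inv_mul (θ : ℝ) (α β : ℂ) :
    (α - exp (θ * I) ^ 2 * β) * (α - (exp (θ * I) ^ 2)⁻¹ * β)
      = (α + β) ^ 2 - 4 * (Real.cos θ : ℂ) ^ 2 * (α * β) := by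
  set z := exp (θ * I)
  have hz : z ≠ 0 := Complex.exp_ne_zero _
  have hcos : 2 * (Real.cos θ : ℂ) = z + z⁻¹ := by
    rw [ofReal_cos, two_cos, neg_mul, Complex.exp_neg]
  rw [show (4 : ℂ) * (Real.cos θ : ℂ) ^ 2 = (z + z⁻¹) ^ 2 by rw [← hcos]; ring]
  field_simp
  ring

theorem exp_two_pi_mul_I_div_pow (n j : ℕ) :
    exp (2 * π * I / (n + 1 : ℕ)) ^ j = exp ((j * π / (n + 1) : ℝ) * I) ^ 2 := by
  rw [← Complex.exp_nat_mul, ← Complex.exp_nat_mul]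
  congr 1
  push_cast
  field_simp

theorem Bpoly_eq_prod_of_ne {t : ℝ} {α β : ℂ} (hsum : α + β = 1) (hprod : α * β = t)
    (hne : α ≠ β) (n : ℕ) :
    Bpoly n t = ∏ j ∈ Icc 1 (n / 2), (1 - 4 * Real.cos (j * π / (n + 1)) ^ 2 * t) := by
  set ω := exp (2 * π * I / (n + 1 : ℕ))
  have hω : IsPrimitiveRoot ω (n + 1) := isPrimitiveRoot_exp _ n.succ_ne_zero
  have hfactor : (Bpoly n t : ℂ) = ∏ j ∈ Icc 1 n, (α - ω ^ j * β) :=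
    mul_left_cancel₀ (sub_ne_zero.2 hne) <| by
      rw [mul_comm, Bpoly_mul_sub_eq_pow_sub_pow hsum hprod, hω.pow_sub_pow_eq_mul_prod_Icc]
  have hmid (hn : Odd n) : α - ω ^ (n / 2 + 1) * β = 1 := by
    rw [(hω.pow n.succ_pos (by grind : n + 1 = (n / 2 + 1) * 2)).eq_neg_one_of_two_right]
    linear_combination hsum
  have hpair : ∀ j ∈ Icc 1 (n / 2), (α - ω ^ j * β) * (α - ω ^ (n + 1 - j) * β)
      = ((1 - 4 * Real.cos (j * π / (n + 1)) ^ 2 * t : ℝ) : ℂ) := by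
    intro j hj
    have hinv : ω ^ (n + 1 - j) = (ω ^ j)⁻¹ := eq_inv_of_mul_eq_one_left <| by
      rw [← pow_add, Nat.sub_add_cancel (by simp at hj; omega), hω.pow_eq_one]
    rw [hinv, exp_two_pi_mul_I_div_pow, sub_exp_sq_mul_sub_inv_mul, hsum, hprod]
    push_cast
    ring
  have := hfactor.trans ((prod_Icc_eq_prod_mul_reflect _ n hmid).trans (prod_congr rfl hpair))
  exact_mod_cast this

end

theorem Bpoly_roots_general (n : ℕ) (t : ℝ) :
    Bpoly n t = ∏ j ∈ Finset.Icc 1 (n / 2), (1 - 4 * Real.cos (j * π / (n + 1)) ^ 2 * t) := by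
  have hcont : Continuous fun t : ℝ ↦
      ∏ j ∈ Finset.Icc 1 (n / 2), (1 - 4 * Real.cos (j * π / (n + 1)) ^ 2 * t) := by fun_prop
  refine congrFun ((continuous_Bpoly n).ext_on (dense_compl_singleton (1 / 4)) hcont
    fun t ht ↦ ?_) t
  obtain ⟨s, hs⟩ := IsAlgClosed.exists_pow_nat_eq (1 - 4 * t : ℂ) two_pos
  refine Bpoly_eq_prod_of_ne (α := (1 + s) / 2) (β := (1 - s) / 2) (by ring)
    (by linear_combination -hs / 4) (fun h ↦ ht ?_) n
  exact Complex.ofReal_injective <| by push_cast; linear_combination hs / 4 - s / 4 * h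

theorem Bpoly_roots (n : ℕ) (hn : 1 < n) (t : ℝ) :
    Bpoly n t = ∏ j ∈ Finset.Icc 1 (n / 2), (1 - 4 * Real.cos (j * π / (n + 1)) ^ 2 * t) :=
  Bpoly_roots_general n t
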